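/- Dirac's formula for the distributional derivative of log x (branch with log(−1) = −iπ): Define L : ℝ∖{0} → ℂ by L(x) = log|x| for x > 0 and L(x) = log|x| − iπ for x < 0. Then for every Schwartz function φ : ℝ → ℂ, −∫_ℝ L(x)·φ′(x) dx = lim_{ε→0⁺} ∫_{|x|>ε} φ(x)/x dx + iπ·φ(0). -/

import Mathlib

open MeasureTheory Filter Real

/-- The complex logarithm of a real number in the branch with `log(−1) = −iπ`. -/
noncomputable def branchLog (x : ℝ) : ℂ :=
  if x < 0 then ((Real.log |x| : ℝ) : ℂ) - Complex.I * (π : ℂ) else ((Real.log |x| : ℝ) : ℂ)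

open Set Topology
open scoped SchwartzMap

/-! Since `Real.log x = log |x|`, `(log x : ℂ)` below is the even logarithm, and
`branchLog = log |x| - iπ 1_{x<0}`; the last term contributes `-iπ ∫_{x<0} φ' = -iπ φ(0)`.
For the rest, integrate `(log |x| φ)' = φ/x + log |x| φ'` over the two half-lines of `{|x| > ε}`:
the terms at `±∞` vanish because `log |x| φ` and its derivative are integrable there, leaving
`∫_{|x|>ε} φ/x = -∫_{|x|>ε} log |x| φ' + log ε (φ(-ε) - φ(ε))`. As `ε → 0⁺` the first term tends
to `-∫ log |x| φ'` by dominated convergence, and the second to `0` because `φ` is Lipschitz and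
`ε log ε → 0`. -/

section HalfLine

variable {E : Type*} [NormedAddCommGroup E] [NormedSpace ℝ E] [CompleteSpace E]
  {f f' : ℝ → E} {a : ℝ}

theorem integral_Ioi_of_hasDerivAt_of_integrableOn (hderiv : ∀ x ∈ Ici a, HasDerivAt f (f' x) x)
    (hf' : IntegrableOn f' (Ioi a)) (hf : IntegrableOn f (Ioi a)) :
    ∫ x in Ioi a, f' x = -f a := by
  rw [integral_Ioi_of_hasDerivAt_of_tendsto' hderiv hf'
    (tendsto_zero_of_hasDerivAt_of_integrableOn_Ioi (fun x hx => hderiv x (mem_Ici_of_Ioi hx))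
      hf' hf), zero_sub]

theorem integral_Iic_of_hasDerivAt_of_integrableOn (hderiv : ∀ x ∈ Iic a, HasDerivAt f (f' x) x)
    (hf' : IntegrableOn f' (Iic a)) (hf : IntegrableOn f (Iic a)) :
    ∫ x in Iic a, f' x = f a := by
  rw [integral_Iic_of_hasDerivAt_of_tendsto' hderiv hf'
    (tendsto_zero_of_hasDerivAt_of_integrableOn_Iic hderiv hf' hf), sub_zero]

end HalfLine

theorem setOf_lt_abs_eq_Iio_union_Ioi {ε : ℝ} : {x : ℝ | ε < |x|} = Iio (-ε) ∪ Ioi ε := by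
  ext x
  simp only [mem_ofPred_eq, lt_abs, mem_union, mem_Iio, mem_Ioi, lt_neg]
  tauto

theorem tendsto_setIntegral_lt_abs {E : Type*} [NormedAddCommGroup E] [NormedSpace ℝ E]
    {g : ℝ → E} (hg : Integrable g) :
    Tendsto (fun ε : ℝ => ∫ x in {x : ℝ | ε < |x|}, g x) (𝓝[>] 0) (𝓝 (∫ x, g x)) := by
  have hmeas : ∀ ε : ℝ, MeasurableSet {x : ℝ | ε < |x|} :=
    fun ε => measurableSet_lt measurable_const measurable_abs
  simp_rw [← integral_indicator (hmeas _)]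
  refine tendsto_integral_filter_of_dominated_convergence (fun x => ‖g x‖)
    (Eventually.of_forall fun ε => hg.aestronglyMeasurable.indicator (hmeas ε))
    (Eventually.of_forall fun ε => Eventually.of_forall fun x => norm_indicator_le_norm_self _ _)
    hg.norm ?_
  filter_upwards [compl_mem_ae_iff.2 (measure_singleton (0 : ℝ))] with x (hx : x ≠ 0)
  refine tendsto_const_nhds.congr' ?_
  filter_upwards [Ioo_mem_nhdsGT (abs_pos.2 hx)] with ε hε
  exact (indicator_of_mem (show x ∈ {x : ℝ | ε < |x|} from hε.2) g).symm

theorem LipschitzWith.tendsto_log_smul_sub {E : Type*} [NormedAddCommGroup E] [NormedSpace ℝ E]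
    {K : NNReal} {f : ℝ → E} (hf : LipschitzWith K f) :
    Tendsto (fun ε : ℝ => log ε • (f (-ε) - f ε)) (𝓝[>] 0) (𝓝 0) := by
  have hlog : Tendsto (fun ε : ℝ => 2 * K * |log ε * ε|) (𝓝[>] 0) (𝓝 0) := by
    simpa using ((tendsto_log_mul_rpow_nhdsGT_zero zero_lt_one).abs).const_mul (2 * (K : ℝ))
  refine squeeze_zero_norm' ?_ hlog
  filter_upwards [self_mem_nhdsWithin] with ε (hε : 0 < ε)
  calc ‖log ε • (f (-ε) - f ε)‖ = |log ε| * ‖f (-ε) - f ε‖ := by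
        rw [norm_smul, Real.norm_eq_abs]
    _ ≤ |log ε| * (K * dist (-ε) ε) := by
      gcongr
      rw [← dist_eq_norm]
      exact hf.dist_le_mul _ _
    _ = 2 * K * |log ε * ε| := by
      rw [Real.dist_eq, abs_of_neg (show -ε - ε < 0 by linarith), abs_mul, abs_of_pos hε]
      ring

theorem integrableOn_div_of_le_abs {g : ℝ → ℂ} (hg : Integrable g) {ε : ℝ}
    (hε : 0 < ε) : IntegrableOn (fun x : ℝ => g x / x) {x : ℝ | ε ≤ |x|} := by
  have hmeas : MeasurableSet {x : ℝ | ε ≤ |x|} := measurableSet_le measurable_const measurable_abs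
  refine (hg.norm.const_mul ε⁻¹).integrableOn.mono'
    (hg.aestronglyMeasurable.div₀ Complex.measurable_ofReal.aestronglyMeasurable).restrict ?_
  filter_upwards [ae_restrict_mem hmeas] with x (hx : ε ≤ |x|)
  rw [norm_div, Complex.norm_real, Real.norm_eq_abs, div_eq_inv_mul]
  gcongr

namespace SchwartzMap

theorem exists_lipschitzWith {F : Type*} [NormedAddCommGroup F] [NormedSpace ℝ F]
    (φ : 𝓢(ℝ, F)) : ∃ K, LipschitzWith K φ := by
  refine ⟨(SchwartzMap.seminorm ℝ 0 0 (derivCLM ℝ F φ)).toNNReal,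
    lipschitzWith_of_nnnorm_deriv_le φ.differentiable fun x => ?_⟩
  rw [← NNReal.coe_le_coe, coe_nnnorm, Real.coe_toNNReal _ (apply_nonneg _ _)]
  exact norm_le_seminorm ℝ (derivCLM ℝ F φ) x

variable (φ : 𝓢(ℝ, ℂ))

theorem integrable_deriv : Integrable (deriv φ) := (derivCLM ℝ ℂ φ).integrable

theorem integrable_log_mul : Integrable (fun x : ℝ => (log x : ℂ) * φ x) := by
  have hmeas : AEStronglyMeasurable (fun x : ℝ => (log x : ℂ) * φ x) :=
    ((Complex.measurable_ofReal.comp measurable_log).mul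
      φ.continuous.measurable).aestronglyMeasurable
  have hnear : IntegrableOn (fun x : ℝ => (log x : ℂ) * φ x) (Ioc (-1) 1) := by
    have hlog : IntegrableOn log (Ioc (-1) 1) :=
      (intervalIntegrable_iff_integrableOn_Ioc_of_le (by norm_num)).1
        intervalIntegral.intervalIntegrable_log'
    exact hlog.ofReal.mul_bdd φ.continuous.aestronglyMeasurable.restrict
      (Eventually.of_forall (norm_le_seminorm ℝ φ))
  have hfar : IntegrableOn (fun x : ℝ => (log x : ℂ) * φ x) (Ioc (-1) 1)ᶜ := by
    refine (φ.integrable_pow_mul volume 1).integrableOn.mono' hmeas.restrict ?_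
    filter_upwards [ae_restrict_mem measurableSet_Ioc.compl] with x hx
    have hx1 : 1 ≤ |x| := by
      simp only [mem_compl_iff, mem_Ioc, not_and_or, not_lt, not_le] at hx
      rcases hx with hx | hx
      · exact le_abs.2 (Or.inr (by linarith))
      · exact le_abs.2 (Or.inl hx.le)
    have hlog : |log x| ≤ |x| := by
      rw [← log_abs, abs_of_nonneg (log_nonneg hx1)]
      exact log_le_self (abs_nonneg x)
    rw [norm_mul, Complex.norm_real, Real.norm_eq_abs, Real.norm_eq_abs, pow_one]
    gcongr
  simpa using hnear.union hfar

theorem integrable_log_mul_deriv : Integrable (fun x : ℝ => (log x : ℂ) * deriv φ x) :=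
  (derivCLM ℝ ℂ φ).integrable_log_mul

theorem hasDerivAt_log_mul {x : ℝ} (hx : x ≠ 0) :
    HasDerivAt (fun y : ℝ => (log y : ℂ) * φ y) (φ x / x + log x * deriv φ x) x := by
  have h := (hasDerivAt_log hx).ofReal_comp.mul (φ.hasDerivAt x)
  rwa [Complex.ofReal_inv, ← div_eq_inv_mul] at h

theorem integral_Ioi_div_add_log_mul_deriv {ε : ℝ} (hε : 0 < ε) :
    ∫ x in Ioi ε, (φ x / x + log x * deriv φ x) = -(log ε * φ ε) := by
  have hsub : Ioi ε ⊆ {x : ℝ | ε ≤ |x|} := fun x (hx : ε < x) => hx.le.trans (le_abs_self x)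
  exact integral_Ioi_of_hasDerivAt_of_integrableOn
    (fun x (hx : ε ≤ x) => φ.hasDerivAt_log_mul (by linarith))
    (((integrableOn_div_of_le_abs φ.integrable hε).mono_set hsub).add
      φ.integrable_log_mul_deriv.integrableOn)
    φ.integrable_log_mul.integrableOn

theorem integral_Iic_div_add_log_mul_deriv {ε : ℝ} (hε : 0 < ε) :
    ∫ x in Iic (-ε), (φ x / x + log x * deriv φ x) = log ε * φ (-ε) := by
  have hsub : Iic (-ε) ⊆ {x : ℝ | ε ≤ |x|} :=
    fun x (hx : x ≤ -ε) => (le_neg.1 hx).trans (neg_le_abs x)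
  rw [integral_Iic_of_hasDerivAt_of_integrableOn
    (fun x (hx : x ≤ -ε) => φ.hasDerivAt_log_mul (by linarith))
    (((integrableOn_div_of_le_abs φ.integrable hε).mono_set hsub).add
      φ.integrable_log_mul_deriv.integrableOn)
    φ.integrable_log_mul.integrableOn, log_neg_eq_log]

theorem setIntegral_lt_abs_div {ε : ℝ} (hε : 0 < ε) :
    ∫ x in {x : ℝ | ε < |x|}, φ x / x =
      -(∫ x in {x : ℝ | ε < |x|}, (log x : ℂ) * deriv φ x) + log ε * (φ (-ε) - φ ε) := by
  have hdiv : IntegrableOn (fun x : ℝ => φ x / x) {x : ℝ | ε < |x|} :=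
    (integrableOn_div_of_le_abs φ.integrable hε).mono_set fun x (hx : ε < |x|) => hx.le
  have hlog : IntegrableOn (fun x : ℝ => (log x : ℂ) * deriv φ x) {x : ℝ | ε < |x|} :=
    φ.integrable_log_mul_deriv.integrableOn
  have hsum : IntegrableOn (fun x : ℝ => φ x / x + log x * deriv φ x) (Iio (-ε) ∪ Ioi ε) := by
    rw [← setOf_lt_abs_eq_Iio_union_Ioi]
    exact hdiv.add hlog
  have hparts : ∫ x in {x : ℝ | ε < |x|}, (φ x / x + log x * deriv φ x) =
      log ε * φ (-ε) - log ε * φ ε := by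
    rw [setOf_lt_abs_eq_Iio_union_Ioi, setIntegral_union ((Iic_disjoint_Ioi (by linarith)).mono_left
        Iio_subset_Iic_self) measurableSet_Ioi hsum.left_of_union hsum.right_of_union,
      setIntegral_congr_set Iio_ae_eq_Iic, φ.integral_Iic_div_add_log_mul_deriv hε,
      φ.integral_Ioi_div_add_log_mul_deriv hε, sub_eq_add_neg]
  rw [integral_add hdiv hlog] at hparts
  linear_combination hparts

theorem integral_Iic_deriv (a : ℝ) : ∫ x in Iic a, deriv φ x = φ a :=
  integral_Iic_of_hasDerivAt_of_integrableOn (fun x _ => φ.hasDerivAt x)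
    φ.integrable_deriv.integrableOn φ.integrable.integrableOn

end SchwartzMap

theorem branchLog_eq_log_sub_indicator (x : ℝ) :
    branchLog x = log x - (Iio 0).indicator (fun _ => Complex.I * π) x := by
  by_cases hx : x < 0 <;> simp [branchLog, hx]

theorem integral_branchLog_mul_deriv (φ : 𝓢(ℝ, ℂ)) :
    ∫ x, branchLog x * deriv φ x = (∫ x, (log x : ℂ) * deriv φ x) - Complex.I * π * φ 0 := by
  have hind : ∀ x, (Iio 0).indicator (fun _ => Complex.I * π) x * deriv φ x =
      (Iio 0).indicator (fun x => Complex.I * π * deriv φ x) x := fun x => by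
    by_cases hx : x < 0 <;> simp [hx]
  simp_rw [branchLog_eq_log_sub_indicator, sub_mul, hind]
  rw [integral_sub φ.integrable_log_mul_deriv
      ((φ.integrable_deriv.const_mul _).indicator measurableSet_Iio),
    integral_indicator measurableSet_Iio, integral_const_mul, setIntegral_congr_set Iio_ae_eq_Iic,
    φ.integral_Iic_deriv]

/-- Dirac's formula for the distributional derivative of `log x` (branch `log(−1) = −iπ`):
`−∫ L(x) φ′(x) dx = Vp(1/x)[φ] + iπ φ(0)`, the principal-value limit existing. -/
theorem deriv_branch_log (φ : SchwartzMap ℝ ℂ) :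
    ∃ pv : ℂ,
      Tendsto (fun ε : ℝ => ∫ x in {x : ℝ | ε < |x|}, φ x / (x : ℂ))
        (nhdsWithin 0 (Set.Ioi 0)) (nhds pv) ∧
      -∫ x : ℝ, branchLog x * deriv (fun y : ℝ => φ y) x = pv + Complex.I * (π : ℂ) * φ 0 := by
  refine ⟨-∫ x, (log x : ℂ) * deriv φ x, ?_, ?_⟩
  · obtain ⟨K, hK⟩ := φ.exists_lipschitzWith
    have hlim := (tendsto_setIntegral_lt_abs φ.integrable_log_mul_deriv).neg.add
      hK.tendsto_log_smul_sub
    rw [add_zero] at hlim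
    refine hlim.congr' ?_
    filter_upwards [self_mem_nhdsWithin] with ε (hε : 0 < ε)
    rw [φ.setIntegral_lt_abs_div hε, ← Complex.real_smul]
  · rw [integral_branchLog_mul_deriv]
    ring
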